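/- Let t_1,...,t_n be transpositions in S_d generating a subgroup whose orbits include a set Σ_i containing two distinct points a and b. Then (t_1,...,t_n) is braid-equivalent to a sequence whose last entry is (ab). -/

import Mathlib

/-- One elementary braid move `σ_j`: replace an adjacent pair `(a, b)` by `(a b a⁻¹, a)`. -/
inductive BraidStep {G : Type*} [Group G] : List G → List G → Prop
  | step (l₁ l₂ : List G) (a b : G) :
      BraidStep (l₁ ++ a :: b :: l₂) (l₁ ++ (a * b * a⁻¹) :: a :: l₂)

/-- Braid equivalence of sequences: the equivalence relation generated by the
elementary moves `σ_j` (and hence also by their inverses). -/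
def BraidEquiv {G : Type*} [Group G] : List G → List G → Prop :=
  Relation.EqvGen BraidStep

section General

variable {G : Type*} [Group G]

theorem braidEquiv_refl (l : List G) : BraidEquiv l l := Relation.EqvGen.refl l

theorem braidEquiv_trans {a b c : List G} (h : BraidEquiv a b) (h' : BraidEquiv b c) :
    BraidEquiv a c := Relation.EqvGen.trans _ _ _ h h'

theorem BraidStep.cons {l₁ l₂ : List G} (x : G) (h : BraidStep l₁ l₂) :
    BraidStep (x :: l₁) (x :: l₂) := by
  cases h with
  | step m₁ m₂ a b => exact BraidStep.step (x :: m₁) m₂ a b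

theorem BraidEquiv.cons {l₁ l₂ : List G} (x : G) (h : BraidEquiv l₁ l₂) :
    BraidEquiv (x :: l₁) (x :: l₂) := by
  induction h with
  | rel u v h => exact Relation.EqvGen.rel _ _ (h.cons x)
  | refl u => exact Relation.EqvGen.refl _
  | symm u v _ ih => exact Relation.EqvGen.symm _ _ ih
  | trans u v w _ _ ih₁ ih₂ => exact Relation.EqvGen.trans _ _ _ ih₁ ih₂

theorem BraidEquiv.append_left (w : List G) {l₁ l₂ : List G} (h : BraidEquiv l₁ l₂) :
    BraidEquiv (w ++ l₁) (w ++ l₂) := by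
  induction w with
  | nil => simpa using h
  | cons x w ih => exact ih.cons x

theorem BraidStep.append_right {l₁ l₂ : List G} (w : List G) (h : BraidStep l₁ l₂) :
    BraidStep (l₁ ++ w) (l₂ ++ w) := by
  cases h with
  | step m₁ m₂ a b =>
    have := BraidStep.step (G := G) m₁ (m₂ ++ w) a b
    simpa using this

theorem BraidEquiv.append_right {l₁ l₂ : List G} (w : List G) (h : BraidEquiv l₁ l₂) :
    BraidEquiv (l₁ ++ w) (l₂ ++ w) := by
  induction h with
  | rel u v h => exact Relation.EqvGen.rel _ _ (h.append_right w)
  | refl u => exact Relation.EqvGen.refl _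
  | symm u v _ ih => exact Relation.EqvGen.symm _ _ ih
  | trans u v w' _ _ ih₁ ih₂ => exact Relation.EqvGen.trans _ _ _ ih₁ ih₂

/-- Pull an element from the front all the way to the back, conjugating everything it passes. -/
theorem braidEquiv_pull_right (a : G) : ∀ l : List G,
    BraidEquiv (a :: l) (l.map (fun x => a * x * a⁻¹) ++ [a])
  | [] => braidEquiv_refl _
  | x :: l => by
    have h1 : BraidStep (a :: x :: l) ((a * x * a⁻¹) :: a :: l) :=
      BraidStep.step [] l a x
    refine braidEquiv_trans (Relation.EqvGen.rel _ _ h1) ?_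
    simpa using (braidEquiv_pull_right a l).cons (a * x * a⁻¹)

/-- Pull an element from the back all the way to the front. -/
theorem braidEquiv_pull_left (a : G) : ∀ l : List G,
    BraidEquiv (l ++ [a]) (a :: l.map (fun x => a⁻¹ * x * a))
  | [] => braidEquiv_refl _
  | x :: l => by
    refine braidEquiv_trans ((braidEquiv_pull_left a l).cons x) ?_
    have h1 : BraidStep (a :: (a⁻¹ * x * a) :: l.map (fun x => a⁻¹ * x * a))
        ((a * (a⁻¹ * x * a) * a⁻¹) :: a :: l.map (fun x => a⁻¹ * x * a)) :=
      BraidStep.step [] _ a (a⁻¹ * x * a)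
    have h2 : a * (a⁻¹ * x * a) * a⁻¹ = x := by group
    rw [h2] at h1
    exact Relation.EqvGen.symm _ _ (Relation.EqvGen.rel _ _ h1)

theorem braidEquiv_to_last (a : G) (l₁ l₂ : List G) :
    BraidEquiv (l₁ ++ a :: l₂) ((l₁ ++ l₂.map (fun x => a * x * a⁻¹)) ++ [a]) := by
  have := (braidEquiv_pull_right a l₂).append_left l₁
  simpa [List.append_assoc] using this

theorem braidEquiv_to_first (a : G) (l₁ l₂ : List G) :
    BraidEquiv (l₁ ++ a :: l₂) (a :: (l₁.map (fun x => a⁻¹ * x * a) ++ l₂)) := by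
  have := (braidEquiv_pull_left a l₁).append_right l₂
  simpa [List.append_assoc] using this

end General

section Perm

open Equiv Equiv.Perm

lemma chain_mono_mem {α : Type*} {r s : α → α → Prop} :
    ∀ (l : List α) (x : α),
      (∀ u v, u ∈ x :: l → v ∈ x :: l → r u v → s u v) → List.Chain r x l → List.Chain s x l
  | [], _, _, _ => List.Chain.nil
  | y :: l, x, h, hc => by
    rcases hc with _ | _ | ⟨hxy, hc⟩
    exact List.Chain.cons (h x y (by simp) (by simp) hxy)
      (chain_mono_mem l y (fun u v hu hv => h u v (by simp at hu ⊢; tauto)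
        (by simp at hv ⊢; tauto)) hc)

lemma isSwap_conj {α : Type*} [DecidableEq α] {t : Equiv.Perm α} (σ : Equiv.Perm α)
    (h : t.IsSwap) : (σ * t * σ⁻¹).IsSwap := by
  obtain ⟨x, y, hxy, rfl⟩ := h
  exact ⟨σ x, σ y, fun h => hxy (σ.injective h), (Equiv.swap_apply_apply σ x y).symm⟩

/-- Key lemma: given a nodup path `a :: p` in the "swap graph" of `L`, we can braid `L`
into a list whose last entry is the swap of the endpoints. -/
lemma key {d : ℕ} : ∀ (p : List (Fin d)) (L : List (Equiv.Perm (Fin d))) (a : Fin d),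
    (∀ t ∈ L, t.IsSwap) → (a :: p).Nodup →
    List.Chain (fun x y => Equiv.swap x y ∈ L) a p → ∀ (hp : p ≠ []),
    ∃ M, BraidEquiv L M ∧ M.getLast? = some (Equiv.swap a (p.getLast hp))
  | [], _, _, _, _, _, hp => absurd rfl hp
  | [c], L, a, hL, hnd, hc, hp => by
    rcases hc with _ | _ | ⟨h1, -⟩
    obtain ⟨l₁, l₂, rfl⟩ := List.append_of_mem h1
    refine ⟨_, braidEquiv_to_last (Equiv.swap a c) l₁ l₂, ?_⟩
    simp [List.getLast?_concat]
  | c :: c' :: rest, L, a, hL, hnd, hc, hp => by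
    rcases hc with _ | _ | ⟨h1, hc⟩
    rcases hc with _ | _ | ⟨h2, hc⟩
    -- h1 : swap a c ∈ L, h2 : swap c c' ∈ L, hc : Chain _ c' rest
    have hnd' := hnd
    simp only [List.nodup_cons, List.mem_cons, not_or] at hnd'
    obtain ⟨⟨hac, hac', haR⟩, ⟨hcc', hcR⟩, hc'R, hndR⟩ := hnd'
    have haC : a ∉ c' :: rest := by simp [hac', haR]
    have hcC : c ∉ c' :: rest := by simp [hcc', hcR]
    set e₁ := Equiv.swap a c with he₁
    set e₂ := Equiv.swap c c' with he₂
    have he₁inv : e₁⁻¹ = e₁ := Equiv.swap_inv a c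
    -- the conjugation map
    set φ : Equiv.Perm (Fin d) → Equiv.Perm (Fin d) := fun x => e₁ * x * e₁⁻¹ with hφ
    have hφswap : ∀ x y : Fin d, φ (Equiv.swap x y) = Equiv.swap (e₁ x) (e₁ y) := fun x y =>
      (Equiv.swap_apply_apply e₁ x y).symm
    have he₁c : e₁ c = a := Equiv.swap_apply_right a c
    have hfix : ∀ x : Fin d, x ≠ a → x ≠ c → e₁ x = x := fun x hx1 hx2 =>
      Equiv.swap_apply_of_ne_of_ne hx1 hx2
    have hφe₂ : φ e₂ = Equiv.swap a c' := by
      rw [he₂, hφswap, he₁c, hfix c' (Ne.symm hac') (Ne.symm hcc')]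
    have hφfix : ∀ x y : Fin d, x ∈ c' :: rest → y ∈ c' :: rest →
        φ (Equiv.swap x y) = Equiv.swap x y := by
      intro x y hx hy
      have hxa : x ≠ a := fun h => haC (h ▸ hx)
      have hxc : x ≠ c := fun h => hcC (h ▸ hx)
      have hya : y ≠ a := fun h => haC (h ▸ hy)
      have hyc : y ≠ c := fun h => hcC (h ▸ hy)
      rw [hφswap, hfix x hxa hxc, hfix y hya hyc]
    have he₁ne₂ : e₂ ≠ e₁ := by
      intro h
      have := congrArg (fun σ : Equiv.Perm (Fin d) => σ c) h
      simp only [he₁, he₂, Equiv.swap_apply_left, Equiv.swap_apply_right] at this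
      exact hac' (this.symm)
    obtain ⟨l₁, l₂, rfl⟩ := List.append_of_mem h1
    have hmem : e₂ ∈ l₁ ∨ e₂ ∈ l₂ := by
      rcases List.mem_append.1 h2 with h | h
      · exact Or.inl h
      · rcases List.mem_cons.1 h with h | h
        · exact absurd h he₁ne₂
        · exact Or.inr h
    -- build M: a braid-equivalent list containing swap a c' and all edges of the rest chain
    have main : ∃ M : List (Equiv.Perm (Fin d)),
        BraidEquiv (l₁ ++ e₁ :: l₂) M ∧ (∀ t ∈ M, t.IsSwap) ∧
        Equiv.swap a c' ∈ M ∧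
        (∀ x y : Fin d, x ∈ c' :: rest → y ∈ c' :: rest → Equiv.swap x y ∈ l₁ ++ e₁ :: l₂ →
          Equiv.swap x y ∈ M) := by
      have hL₁ : ∀ t ∈ l₁, t.IsSwap := fun t ht => hL t (by simp [ht])
      have hL₂ : ∀ t ∈ l₂, t.IsSwap := fun t ht => hL t (by simp [ht])
      have he₁swap : e₁.IsSwap := ⟨a, c, hac, rfl⟩
      have hmemaux : ∀ x y : Fin d, x ∈ c' :: rest → y ∈ c' :: rest →
          Equiv.swap x y ∈ l₁ ++ e₁ :: l₂ → Equiv.swap x y ∈ l₁ ∨ Equiv.swap x y ∈ l₂ := by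
        intro x y hx hy hm
        have hne : Equiv.swap x y ≠ e₁ := by
          intro h
          have := congrArg (fun σ : Equiv.Perm (Fin d) => σ c) h
          simp only [he₁, Equiv.swap_apply_right] at this
          have hxc : x ≠ c := fun h => hcC (h ▸ hx)
          have hyc : y ≠ c := fun h => hcC (h ▸ hy)
          rw [Equiv.swap_apply_of_ne_of_ne (Ne.symm hxc) (Ne.symm hyc)] at this
          exact hac this.symm
        rcases List.mem_append.1 hm with h | h
        · exact Or.inl h
        · rcases List.mem_cons.1 h with h | h
          · exact absurd h hne
          · exact Or.inr h
      rcases hmem with hin | hin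
      · -- e₂ in the left part: pull e₁ to the front
        refine ⟨e₁ :: (l₁.map (fun x => e₁⁻¹ * x * e₁) ++ l₂), braidEquiv_to_first e₁ l₁ l₂,
          ?_, ?_, ?_⟩
        · intro t ht
          rcases List.mem_cons.1 ht with rfl | ht
          · exact he₁swap
          rcases List.mem_append.1 ht with ht | ht
          · obtain ⟨u, hu, rfl⟩ := List.mem_map.1 ht
            have := isSwap_conj e₁⁻¹ (hL₁ u hu)
            simpa using this
          · exact hL₂ t ht
        · have : φ e₂ ∈ l₁.map (fun x => e₁⁻¹ * x * e₁) := by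
            refine List.mem_map.2 ⟨e₂, hin, ?_⟩
            rw [he₁inv]; rfl
          rw [hφe₂] at this
          simp [this]
        · intro x y hx hy hm
          rcases hmemaux x y hx hy hm with h | h
          · have : φ (Equiv.swap x y) ∈ l₁.map (fun x => e₁⁻¹ * x * e₁) := by
              refine List.mem_map.2 ⟨_, h, ?_⟩
              rw [he₁inv]; rfl
            rw [hφfix x y hx hy] at this
            simp [this]
          · simp [h]
      · -- e₂ in the right part: pull e₁ to the back
        refine ⟨(l₁ ++ l₂.map φ) ++ [e₁], braidEquiv_to_last e₁ l₁ l₂, ?_, ?_, ?_⟩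
        · intro t ht
          simp only [List.mem_append, List.mem_singleton, List.mem_map] at ht
          rcases ht with (ht | ⟨u, hu, rfl⟩) | rfl
          · exact hL₁ t ht
          · exact isSwap_conj e₁ (hL₂ u hu)
          · exact he₁swap
        · have : φ e₂ ∈ l₂.map φ := List.mem_map.2 ⟨e₂, hin, rfl⟩
          rw [hφe₂] at this
          simp [this]
        · intro x y hx hy hm
          rcases hmemaux x y hx hy hm with h | h
          · simp [h]
          · have : φ (Equiv.swap x y) ∈ l₂.map φ := List.mem_map.2 ⟨_, h, rfl⟩
            rw [hφfix x y hx hy] at this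
            simp [this]
    obtain ⟨M, hMeq, hMswap, hMac', hMedges⟩ := main
    -- new chain a :: c' :: rest in M
    have hchainM : List.Chain (fun x y => Equiv.swap x y ∈ M) a (c' :: rest) :=
      List.Chain.cons hMac'
        (chain_mono_mem (r := fun x y => Equiv.swap x y ∈ l₁ ++ e₁ :: l₂) rest c'
          (fun u v hu hv hr => hMedges u v hu hv hr) hc)
    have hndM : (a :: c' :: rest).Nodup := by
      simp only [List.nodup_cons, List.mem_cons, not_or]
      exact ⟨⟨hac', haR⟩, ⟨hc'R, hndR⟩⟩
    obtain ⟨M', hM'eq, hM'last⟩ :=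
      key (c' :: rest) M a hMswap hndM hchainM (by simp)
    refine ⟨M', braidEquiv_trans hMeq hM'eq, ?_⟩
    have : (c :: c' :: rest).getLast hp = (c' :: rest).getLast (by simp) :=
      List.getLast_cons _
    rw [this]
    exact hM'last

end Perm

/-- A sequence of transpositions `(t_1,...,t_n)` with `a ≠ b` in the same orbit of
`⟨t_1,...,t_n⟩` is braid-equivalent to a sequence whose last entry is `(ab)`. -/
theorem braidEquiv_last_swap {d : ℕ} (L : List (Equiv.Perm (Fin d)))
    (hL : ∀ t ∈ L, t.IsSwap)
    (a b : Fin d) (hab : a ≠ b)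
    (horb : ∃ σ ∈ Subgroup.closure {x : Equiv.Perm (Fin d) | x ∈ L}, σ a = b) :
    ∃ L' : List (Equiv.Perm (Fin d)),
      BraidEquiv L L' ∧ L'.getLast? = some (Equiv.swap a b) := by
  classical
  set e : Fin d → Fin d → Prop := fun x y => x ≠ y ∧ Equiv.swap x y ∈ L with he
  have hesymm : Symmetric e := by
    intro x y ⟨h1, h2⟩
    exact ⟨h1.symm, by rwa [Equiv.swap_comm]⟩
  -- every element of the closure moves points along the graph
  have hreach : ∀ σ ∈ Subgroup.closure {x : Equiv.Perm (Fin d) | x ∈ L},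
      ∀ x : Fin d, Relation.ReflTransGen e x (σ x) := by
    intro σ hσ
    induction hσ using Subgroup.closure_induction with
    | mem t ht =>
      intro x
      obtain ⟨u, v, huv, rfl⟩ := hL t ht
      by_cases hxu : x = u
      · subst hxu
        rw [Equiv.swap_apply_left]
        exact Relation.ReflTransGen.single ⟨huv, ht⟩
      by_cases hxv : x = v
      · subst hxv
        rw [Equiv.swap_apply_right]
        exact Relation.ReflTransGen.single ⟨Ne.symm huv, by rwa [Equiv.swap_comm]⟩
      · rw [Equiv.swap_apply_of_ne_of_ne hxu hxv]
    | one => intro x; simp only [Equiv.Perm.one_apply]; exact Relation.ReflTransGen.refl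
    | mul σ τ hσ hτ ihσ ihτ =>
      intro x
      exact Relation.ReflTransGen.trans (ihτ x) (by simpa using ihσ (τ x))
    | inv σ hσ ihσ =>
      intro x
      have := ihσ (σ⁻¹ x)
      rw [show σ (σ⁻¹ x) = x from σ.apply_symm_apply x] at this
      exact @Std.Symm.symm _ _ (@Relation.ReflTransGen.stdSymm _ e ⟨fun x y h => hesymm h⟩) _ _ this
  obtain ⟨σ, hσ, hσa⟩ := horb
  have hrtg : Relation.ReflTransGen e a b := hσa ▸ hreach σ hσ a
  -- turn reachability into a nodup path via simple graphs
  let Γ : SimpleGraph (Fin d) := ⟨e, ⟨fun x y h => hesymm h⟩, ⟨fun x hx => hx.1 rfl⟩⟩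
  have hΓreach : Γ.Reachable a b := (Γ.reachable_iff_reflTransGen a b).2 hrtg
  obtain ⟨w⟩ := hΓreach
  let pth : Γ.Path a b := w.toPath
  have hnd : pth.1.support.Nodup := pth.2.support_nodup
  have hsupp : pth.1.support = a :: pth.1.support.tail := pth.1.support_eq_cons
  have hlast? : pth.1.support.getLast? = some b := by
    rw [List.getLast?_eq_getLast_of_ne_nil (pth.1.support_ne_nil), pth.1.getLast_support]
  rw [hsupp] at hlast?
  have htail_ne : pth.1.support.tail ≠ [] := by
    intro h
    rw [h] at hlast?
    simp at hlast?
    exact hab hlast?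
  have hchainAdj : List.Chain Γ.Adj a pth.1.support.tail := by
    have h := pth.1.isChain_adj_support
    rw [hsupp] at h
    exact h
  have hchain : List.Chain (fun x y => Equiv.swap x y ∈ L) a pth.1.support.tail :=
    List.IsChain.imp (fun x y h => h.2) hchainAdj
  have hndfull : (a :: pth.1.support.tail).Nodup := hsupp ▸ hnd
  obtain ⟨M, hMeq, hMlast⟩ := key pth.1.support.tail L a hL hndfull hchain htail_ne
  refine ⟨M, hMeq, ?_⟩
  rw [hMlast]
  have h1 : (a :: pth.1.support.tail).getLast (by simp) = pth.1.support.tail.getLast htail_ne :=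
    List.getLast_cons _
  rw [List.getLast?_eq_getLast_of_ne_nil (by simp), h1] at hlast?
  rw [Option.some_inj.1 hlast?]
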